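/- arXiv:1108.6066 — 2 statements merged into one kernel-verified Lean document; each statement's English description precedes it below -/
import Mathlib

section
/- Let m > 1 and H a subgroup of (ℤ/mℤ)ˣ, and let M = {n ∈ ℕ⁺ : gcd(n,m) = 1 and (n mod m) ∈ H}. Then for every prime p not dividing m and every pair a, b ∈ M, there exist a', b' ∈ M with a·b' = b·a' and (p ∤ a' or p ∤ b'). -/
/-- The Hilbert monoid `M^G_H` attached to a subgroup `H` of `(ℤ/mℤ)ˣ`:
the positive integers coprime to `m` whose residue class mod `m` lies in `H`. -/
def hilbertMonoidOf (m : ℕ) (H : Subgroup (ZMod m)ˣ) : Set ℕ :=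
  {n | 0 < n ∧ ∃ u : (ZMod m)ˣ, u ∈ H ∧ (u : ZMod m) = (n : ZMod m)}

lemma hilbert_aux (m : ℕ) (H : Subgroup (ZMod m)ˣ)
    (p : ℕ) (hp : p.Prime) (hpm : ¬ p ∣ m)
    (a b : ℕ) (ha : a ∈ hilbertMonoidOf m H) (hb : b ∈ hilbertMonoidOf m H)
    (hle : padicValNat p a ≤ padicValNat p b) :
    ∃ a' b' : ℕ, a' ∈ hilbertMonoidOf m H ∧ b' ∈ hilbertMonoidOf m H ∧
      a * b' = b * a' ∧ ¬ p ∣ a' := by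
  obtain ⟨ha0, u, huH, hu⟩ := ha
  obtain ⟨hb0, v, hvH, hv⟩ := hb
  have hane : a ≠ 0 := ha0.ne'
  have hbne : b ≠ 0 := hb0.ne'
  set k := padicValNat p a with hk
  have hdva : p ^ k ∣ a := pow_padicValNat_dvd
  have hdvb : p ^ k ∣ b := dvd_trans (pow_dvd_pow p hle) pow_padicValNat_dvd
  set a0 := a / p ^ k with ha0def
  set b0 := b / p ^ k with hb0def
  have haeq : a0 * p ^ k = a := Nat.div_mul_cancel hdva
  have hbeq : b0 * p ^ k = b := Nat.div_mul_cancel hdvb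
  have hpa0 : ¬ p ∣ a0 := by
    intro hd
    have hdd : p ^ (k + 1) ∣ a := by
      rw [← haeq, pow_succ, mul_comm a0]
      exact mul_dvd_mul dvd_rfl hd
    haveI : Fact p.Prime := ⟨hp⟩
    exact pow_succ_padicValNat_not_dvd hane hdd
  have hcop : Nat.Coprime m p := (Nat.coprime_comm.mp ((hp.coprime_iff_not_dvd).mpr hpm))
  obtain ⟨t, htm, htp⟩ := Nat.chineseRemainder hcop (p ^ k) 1
  have hpt : ¬ p ∣ t := by
    intro hd
    have h0 : t ≡ 0 [MOD p] := (Nat.modEq_zero_iff_dvd).mpr hd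
    have h1 : p ∣ 1 := (Nat.modEq_zero_iff_dvd).mp (htp.symm.trans h0)
    have h2 := Nat.le_of_dvd one_pos h1
    have h3 := hp.two_le
    omega
  have ht0 : 0 < t := by
    rcases Nat.eq_zero_or_pos t with h | h
    · exact absurd (h ▸ dvd_zero p) hpt
    · exact h
  have htcast : (t : ZMod m) = ((p ^ k : ℕ) : ZMod m) :=
    (ZMod.natCast_eq_natCast_iff _ _ _).mpr htm
  refine ⟨a0 * t, b0 * t, ⟨?_, u, huH, ?_⟩, ⟨?_, v, hvH, ?_⟩, ?_, ?_⟩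
  · exact Nat.mul_pos (Nat.pos_of_ne_zero (by
      intro h; exact hane (by rw [← haeq, h, zero_mul]))) ht0
  · push_cast
    rw [htcast]
    push_cast
    rw [show ((a0 : ZMod m) * (p:ZMod m) ^ k) = ((a0 * p ^ k : ℕ) : ZMod m) by push_cast; ring,
      haeq, hu]
  · exact Nat.mul_pos (Nat.pos_of_ne_zero (by
      intro h; exact hbne (by rw [← hbeq, h, zero_mul]))) ht0
  · push_cast
    rw [htcast]
    push_cast
    rw [show ((b0 : ZMod m) * (p:ZMod m) ^ k) = ((b0 * p ^ k : ℕ) : ZMod m) by push_cast; ring,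
      hbeq, hv]
  · rw [← haeq, ← hbeq]; ring
  · intro hd
    rcases (hp.dvd_mul).mp hd with h | h
    · exact hpa0 h
    · exact hpt h

/-- Nonsingularity of Hilbert monoids: for every prime `p ∤ m` and `a, b ∈ M^G_H`
there are `a', b' ∈ M^G_H` with `a·b' = b·a'` and `p ∤ a'` or `p ∤ b'`. -/
theorem stmt4 (m : ℕ) (hm : 1 < m) (H : Subgroup (ZMod m)ˣ)
    (p : ℕ) (hp : p.Prime) (hpm : ¬ p ∣ m)
    (a b : ℕ) (ha : a ∈ hilbertMonoidOf m H) (hb : b ∈ hilbertMonoidOf m H) :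
    ∃ a' b' : ℕ, a' ∈ hilbertMonoidOf m H ∧ b' ∈ hilbertMonoidOf m H ∧
      a * b' = b * a' ∧ (¬ p ∣ a' ∨ ¬ p ∣ b') := by
  rcases le_total (padicValNat p a) (padicValNat p b) with h | h
  · obtain ⟨a', b', h1, h2, h3, h4⟩ := hilbert_aux m H p hp hpm a b ha hb h
    exact ⟨a', b', h1, h2, h3, Or.inl h4⟩
  · obtain ⟨a', b', h1, h2, h3, h4⟩ := hilbert_aux m H p hp hpm b a hb ha h
    exact ⟨b', a', h2, h1, h3.symm, Or.inr h4⟩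
end

section
/- Let p ≡ 1 (mod 4) be prime and χ a quartic character mod p attached to a Gaussian prime π = a + bi of norm p (so χ(x) ≡ x^{(p−1)/4} mod π). Then π divides the Jacobi sum J(χ,χ), and since |J(χ,χ)|² = p, the ideal (J(χ,χ)) in ℤ[i] equals (π). -/
set_option synthInstance.maxHeartbeats 1000000
set_option maxHeartbeats 1000000

open Finset

section aux

lemma gi_unit_star {z : GaussianInt} (hz : z ^ 4 = 1) : star z * z = 1 := by
  have hu : IsUnit z := IsUnit.of_mul_eq_one (a := z) (z ^ 3) (by rw [← pow_succ']; exact hz)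
  have h1 : z.norm = 1 := (Zsqrtd.norm_eq_one_iff' (by norm_num) z).mpr hu
  have := Zsqrtd.norm_eq_mul_conj z
  rw [h1] at this
  simpa [mul_comm] using this.symm

lemma sum_pow_mul_pow_eq_zero {p : ℕ} [Fact p.Prime] {k : ℕ}
    (h2k : 2 * k < p - 1) :
    ∑ t : ZMod p, t ^ k * (1 - t) ^ k = 0 := by
  have hterm : ∀ t : ZMod p, t ^ k * (1 - t) ^ k
      = ∑ m ∈ range (k + 1), (-1) ^ m * (k.choose m : ZMod p) * t ^ (k + m) := by
    intro t
    rw [sub_eq_add_neg, add_comm, add_pow, Finset.mul_sum]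
    refine Finset.sum_congr rfl fun m hm => ?_
    rw [neg_pow]
    ring
  calc ∑ t : ZMod p, t ^ k * (1 - t) ^ k
      = ∑ t : ZMod p, ∑ m ∈ range (k + 1), (-1) ^ m * (k.choose m : ZMod p) * t ^ (k + m) :=
        Finset.sum_congr rfl fun t _ => hterm t
    _ = ∑ m ∈ range (k + 1), ∑ t : ZMod p, (-1) ^ m * (k.choose m : ZMod p) * t ^ (k + m) :=
        Finset.sum_comm
    _ = 0 := by
        refine Finset.sum_eq_zero fun m hm => ?_
        rw [← Finset.mul_sum]
        have hlt : k + m < Fintype.card (ZMod p) - 1 := by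
          rw [ZMod.card]
          have := Finset.mem_range.mp hm
          omega
        rw [FiniteField.sum_pow_lt_card_sub_one _ _ hlt, mul_zero]

end aux

/-- Let `p ≡ 1 (mod 4)` be prime and `π = a + bi` a Gaussian prime of norm `p`,
and `χ` the quartic residue character mod `π` (so `χ(x) ≡ x^{(p−1)/4} mod π`,
`χ` of order 4). Then `π` divides the Jacobi sum `J(χ,χ) = ∑ χ(t)χ(1−t)`, and
since `J(χ,χ)·conj(J(χ,χ)) = p`, the ideal `(J(χ,χ))` in `ℤ[i]` equals `(π)`. -/
theorem stmt18 (p : ℕ) (hp : p.Prime) [Fact p.Prime] (hp4 : p % 4 = 1)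
    (π : GaussianInt) (hπ : Zsqrtd.norm π = p)
    (χ : MulChar (ZMod p) GaussianInt) (hord : orderOf χ = 4)
    (hres : ∀ x : ZMod p, x ≠ 0 →
      Ideal.Quotient.mk (Ideal.span {π}) (χ x) =
        Ideal.Quotient.mk (Ideal.span {π}) ((x.val : GaussianInt) ^ ((p - 1) / 4))) :
    π ∣ (∑ t : ZMod p, χ t * χ (1 - t)) ∧
    (∑ t : ZMod p, χ t * χ (1 - t)) * star (∑ t : ZMod p, χ t * χ (1 - t)) =
      (p : GaussianInt) ∧
    Ideal.span {(∑ t : ZMod p, χ t * χ (1 - t))} = Ideal.span {π} := by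
  set J : GaussianInt := ∑ t : ZMod p, χ t * χ (1 - t) with hJ
  have hp5 : 5 ≤ p := by
    have := hp.two_le
    omega
  set k : ℕ := (p - 1) / 4 with hkdef
  have hk4 : 4 * k = p - 1 := by omega
  have hk0 : 0 < k := by omega
  -- π divides p
  have hppi : (p : GaussianInt) = π * star π := by
    have := Zsqrtd.norm_eq_mul_conj π
    rw [hπ] at this
    exact_mod_cast this
  have hpdvd : π ∣ (p : GaussianInt) := ⟨star π, hppi⟩
  -- Part 1: π ∣ J
  have hdvdJ : π ∣ J := by
    set S : ℤ := ∑ t : ZMod p, (t.val : ℤ) ^ k * ((1 - t).val : ℤ) ^ k with hSdef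
    have hS0 : ((S : ℤ) : ZMod p) = 0 := by
      push_cast [hSdef]
      simp only [ZMod.natCast_val, ZMod.cast_id]
      exact sum_pow_mul_pow_eq_zero (by omega)
    have hpS : (p : ℤ) ∣ S := by
      exact_mod_cast (ZMod.intCast_zmod_eq_zero_iff_dvd S p).mp hS0
    have hScast : ((p : ℤ) : GaussianInt) ∣ (S : GaussianInt) := map_dvd (Int.castRingHom GaussianInt) hpS
    have hpiS : π ∣ (S : GaussianInt) := hpdvd.trans (by exact_mod_cast hScast)
    have hmk : Ideal.Quotient.mk (Ideal.span {π}) J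
        = Ideal.Quotient.mk (Ideal.span {π}) ((S : GaussianInt)) := by
      have hcast : ((S : GaussianInt)) = ∑ t : ZMod p, (t.val : GaussianInt) ^ k * ((1 - t).val : GaussianInt) ^ k := by
        push_cast [hSdef]; rfl
      rw [hJ, hcast, map_sum, map_sum]
      refine Finset.sum_congr rfl fun t _ => ?_
      by_cases ht0 : t = 0
      · subst ht0
        simp [MulChar.map_zero, ZMod.val_zero, zero_pow hk0.ne']
      by_cases ht1 : t = 1
      · subst ht1
        simp [MulChar.map_zero, ZMod.val_zero, zero_pow hk0.ne']
      · have h1t : (1 : ZMod p) - t ≠ 0 := sub_ne_zero.mpr (Ne.symm ht1)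
        rw [map_mul, map_mul, hres t ht0, hres (1 - t) h1t]
    have : Ideal.Quotient.mk (Ideal.span {π}) J = 0 := by
      rw [hmk, Ideal.Quotient.eq_zero_iff_mem, Ideal.mem_span_singleton]
      exact hpiS
    rw [Ideal.Quotient.eq_zero_iff_mem, Ideal.mem_span_singleton] at this
    exact this
  -- χ and χ² nontrivial
  have hχ1 : χ ≠ 1 := by
    intro h
    rw [h, orderOf_one] at hord
    omega
  have hχ2 : χ * χ ≠ 1 := by
    intro h
    have : orderOf χ ∣ 2 := orderOf_dvd_of_pow_eq_one (by rw [pow_two]; exact h)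
    rw [hord] at this
    omega
  -- star of χ values
  have hχ4 : χ ^ 4 = 1 := by rw [← hord]; exact pow_orderOf_eq_one χ
  have hstar : ∀ x : ZMod p, star (χ x) = χ⁻¹ x := by
    intro x
    by_cases hx : IsUnit x
    · have h4 : (χ x) ^ 4 = 1 := by
        rw [← MulChar.pow_apply' χ (by norm_num) x, hχ4, ← hx.unit_spec,
          MulChar.one_apply_coe hx.unit]
      have hs : star (χ x) * χ x = 1 := gi_unit_star h4
      have hi : χ⁻¹ x * χ x = 1 := by
        rw [MulChar.inv_apply, ← map_mul, Ring.inverse_mul_cancel _ hx, map_one]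
      have hne : χ x ≠ 0 := by
        intro h0
        rw [h0, mul_zero] at hs
        exact one_ne_zero hs.symm
      exact mul_right_cancel₀ hne (hs.trans hi.symm)
    · rw [χ.map_nonunit hx, χ⁻¹.map_nonunit hx, star_zero]
  have hstarJ : star J = jacobiSum χ⁻¹ χ⁻¹ := by
    rw [hJ, jacobiSum, star_sum]
    refine Finset.sum_congr rfl fun t _ => ?_
    rw [star_mul, mul_comm, hstar, hstar]
  -- Part 2 via complex embedding
  have hJstar : J * star J = (p : GaussianInt) := by
    have hinj := GaussianInt.toComplex_injective
    set f := GaussianInt.toComplex with hf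
    set χ' := χ.ringHomComp f with hχ'
    have hrc : ringChar ℂ ≠ ringChar (ZMod p) := by
      rw [ringChar.eq_zero, ZMod.ringChar_zmod_n]
      exact fun h => hp.ne_zero h.symm
    have h1 : χ' ≠ 1 := (MulChar.ringHomComp_ne_one_iff hinj).mpr hχ1
    have h2 : χ' * χ' ≠ 1 := by
      rw [← MulChar.ringHomComp_mul]
      exact (MulChar.ringHomComp_ne_one_iff hinj).mpr hχ2
    have key := jacobiSum_mul_jacobiSum_inv hrc h1 h1 h2
    apply hinj
    have hstarJ' : star (jacobiSum χ χ) = jacobiSum χ⁻¹ χ⁻¹ := hstarJ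
    have hJj : J = jacobiSum χ χ := rfl
    rw [map_mul, hJj, hstarJ', ← jacobiSum_ringHomComp, ← jacobiSum_ringHomComp,
      ← MulChar.ringHomComp_inv, ← hχ', key, ZMod.card]
    simp [hf]
  refine ⟨hdvdJ, hJstar, ?_⟩
  -- Part 3
  obtain ⟨c, hc⟩ := hdvdJ
  have hπ0 : π ≠ 0 := by
    intro h
    rw [h, Zsqrtd.norm_zero] at hπ
    exact hp.ne_zero (by exact_mod_cast hπ.symm)
  have hp0 : (p : GaussianInt) ≠ 0 := Nat.cast_ne_zero.mpr hp.ne_zero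
  have hcunit : IsUnit c := by
    have h : π * star π * (c * star c) = π * star π * 1 := by
      calc π * star π * (c * star c) = (π * c) * star (π * c) := by rw [star_mul]; ring
      _ = J * star J := by rw [hc]
      _ = (p : GaussianInt) := hJstar
      _ = π * star π * 1 := by rw [hppi, mul_one]
    exact IsUnit.of_mul_eq_one (a := c) (star c)
      (mul_left_cancel₀ (by rw [← hppi]; exact hp0) h)
  rw [hc]
  apply Ideal.span_singleton_eq_span_singleton.mpr
  have ha : Associated π (π * c) := ⟨hcunit.unit, by rw [IsUnit.unit_spec]⟩
  exact ha.symm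
end
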